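/- For a bounded linear operator T on C([0,ω₁]), the following are equivalent: (i) the range of T is a separable subset of C([0,ω₁]); (ii) T ∈ G_{C([0,σ])}(C([0,ω₁])) for some countable ordinal σ; (iii) T ∈ \overline{G}_{C([0,σ])}(C([0,ω₁])) for some countable ordinal σ. -/

import Mathlib

set_option synthInstance.maxHeartbeats 1000000
set_option maxHeartbeats 2000000

noncomputable section
open Set Ordinal

/-- `ω₁`, the first uncountable ordinal. -/
abbrev omega1 : Ordinal.{0} := Ordinal.omega 1

/-- Every ordinal interval `[0, o]` is a compact space in its (inherited) order topology. -/
instance (o : Ordinal) : CompactSpace (Set.Iic o) := by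
  have h : IsCompact (Set.Iic o) := by
    have := isCompact_Icc (a := (⊥ : Ordinal)) (b := o)
    rwa [Set.Icc_bot] at this
  exact isCompact_iff_compactSpace.mp h

/-- The Banach space `C([0, ω₁])` of continuous real-valued functions on `[0, ω₁]`,
with the supremum norm. -/
abbrev CC := C(Set.Iic omega1, ℝ)

/-- `G_Z(C([0,ω₁]))`: the ideal of operators factoring through `Z`, i.e. the linear span of
the operators of the form `R ∘ S` with `S : C([0,ω₁]) → Z` and `R : Z → C([0,ω₁])`. -/
def GIdeal (Z : Type*) [NormedAddCommGroup Z] [NormedSpace ℝ Z] :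
    Submodule ℝ (CC →L[ℝ] CC) :=
  Submodule.span ℝ {T : CC →L[ℝ] CC | ∃ (S : CC →L[ℝ] Z) (R : Z →L[ℝ] CC), T = R.comp S}

/-!
A continuous function on `[0, ω₁]` is constant on a tail `[σ, ω₁]` with `σ < ω₁`, because the
neighbourhood filter of `ω₁` is closed under countable intersections. Applied to a countable dense
subset of the range of `T`, this yields one countable `σ` beyond which every function in the range
is constant, so `T` factors through `C([0, σ])` by restriction and extension along
`x ↦ min σ x`. Conversely `C([0, σ])` is separable for countable `σ`, and the operators with
separable range form a closed subspace containing every operator factoring through it.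
-/

open TopologicalSpace Filter Topology Cardinal

theorem Ordinal.countable_Iic_of_lt_omega1 {σ : Ordinal.{0}} (hσ : σ < omega1) :
    (Iic σ).Countable := by
  rw [← Order.Iio_succ, ← le_aleph0_iff_set_countable, Cardinal.mk_Iio_ordinal, lift_le_aleph0,
    ← lt_aleph_one_iff, ← lt_ord, ord_aleph]
  exact (isSuccLimit_omega 1).succ_lt hσ

theorem OrderTopology.secondCountableTopology_of_countable {α : Type*} [TopologicalSpace α]
    [LinearOrder α] [OrderTopology α] [Countable α] : SecondCountableTopology α := by
  refine ⟨⟨{s | ∃ a, s = Ioi a ∨ s = Iio a}, ?_, OrderTopology.topology_eq_generate_intervals⟩⟩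
  refine ((countable_range Ioi).union (countable_range Iio)).mono ?_
  rintro s ⟨a, rfl | rfl⟩
  exacts [Or.inl ⟨a, rfl⟩, Or.inr ⟨a, rfl⟩]

theorem separableSpace_continuousMap_Iic {σ : Ordinal.{0}} (hσ : σ < omega1) :
    SeparableSpace C(Iic σ, ℝ) :=
  have := (Ordinal.countable_Iic_of_lt_omega1 hσ).to_subtype
  have := OrderTopology.secondCountableTopology_of_countable (α := Iic σ)
  inferInstance

-- `ω₁` has uncountable cofinality, so countably many neighbourhoods of `ω₁` share a tail.
instance : CountableInterFilter (𝓝 (⊤ : Iic omega1)) := by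
  refine ⟨fun S hS hSmem => ?_⟩
  have hbot : (⊥ : Iic omega1) < ⊤ := Subtype.mk_lt_mk.2 (omega_pos 1)
  choose l hl hlS using fun s (hs : s ∈ S) => exists_Ioc_subset_of_mem_nhds (hSmem s hs) ⟨⊥, hbot⟩
  have := hS.to_subtype
  have hsup : ⨆ s : S, (l s s.2 : Ordinal) < omega1 := Ordinal.iSup_lt_omega_one fun s => hl s s.2
  refine mem_of_superset (Ioi_mem_nhds (a := ⟨_, hsup.le⟩) hsup) fun x hx s hs =>
    hlS s hs ⟨?_, le_top⟩
  exact (Ordinal.le_iSup (fun s : S => (l s s.2 : Ordinal)) ⟨s, hs⟩).trans_lt hx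

theorem ContinuousMap.eventually_eq_top {Y : Type*} [TopologicalSpace Y] [T1Space Y]
    [FirstCountableTopology Y] (f : C(Iic omega1, Y)) : ∀ᶠ x in 𝓝 ⊤, f x = f ⊤ := by
  obtain ⟨S, hS_open, hS_count, hS⟩ := IsGδ.singleton (f ⊤)
  have hmem : ∀ t ∈ S, f ⊤ ∈ t := fun t ht => (hS ▸ rfl : f ⊤ ∈ ⋂₀ S) t ht
  have : f ⁻¹' ⋂₀ S ∈ 𝓝 ⊤ := by
    rw [preimage_sInter]
    exact (countable_bInter_mem hS_count).2 fun t ht =>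
      f.continuous.continuousAt.preimage_mem_nhds ((hS_open t ht).mem_nhds (hmem t ht))
  rwa [← hS] at this

theorem TopologicalSpace.IsSeparable.eventually_forall_eq_top {Y : Type*} [TopologicalSpace Y]
    [T2Space Y] [FirstCountableTopology Y] {s : Set C(Iic omega1, Y)} (hs : IsSeparable s) :
    ∀ᶠ x in 𝓝 ⊤, ∀ f ∈ s, f x = f ⊤ := by
  obtain ⟨D, hD, hsD⟩ := hs
  filter_upwards [(eventually_countable_ball hD).2 fun f _ => f.eventually_eq_top] with x hx f hf
  exact closure_minimal (t := {g : C(Iic omega1, Y) | g x = g ⊤}) hx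
    (isClosed_eq (continuous_eval_const x) (continuous_eval_const ⊤)) (hsD hf)

theorem exists_lt_omega1_of_eventually_nhds_top {p : Iic omega1 → Prop}
    (h : ∀ᶠ x in 𝓝 ⊤, p x) : ∃ σ < omega1, ∀ x : Iic omega1, σ ≤ x.1 → p x := by
  obtain ⟨l, hl, hlp⟩ := exists_Ioc_subset_of_mem_nhds h ⟨⊥, Subtype.mk_lt_mk.2 (omega_pos 1)⟩
  refine ⟨Order.succ l.1, (isSuccLimit_omega 1).succ_lt hl, fun x hx => hlp ⟨?_, le_top⟩⟩
  exact Subtype.coe_lt_coe.1 (Order.succ_le_iff.1 hx)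

theorem Set.continuous_projIic {α : Type*} [TopologicalSpace α] [LinearOrder α]
    [OrderClosedTopology α] {b : α} : Continuous (projIic b) :=
  (continuous_const.min continuous_id).subtype_mk _

def ContinuousMap.compRightCLM {X Y : Type*} [TopologicalSpace X] [TopologicalSpace Y]
    (g : C(X, Y)) : C(Y, ℝ) →L[ℝ] C(X, ℝ) :=
  ⟨(compRightAlgHom ℝ ℝ g).toLinearMap, compRightAlgHom_continuous ℝ ℝ g⟩

theorem mem_GIdeal_of_factors_through {K : Type*} [TopologicalSpace K] [CompactSpace K]
    (i : C(K, Iic omega1)) (r : C(Iic omega1, K)) (T : CC →L[ℝ] CC)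
    (h : ∀ f x, T f (i (r x)) = T f x) : T ∈ GIdeal C(K, ℝ) := by
  refine Submodule.subset_span ⟨i.compRightCLM.comp T, r.compRightCLM, ?_⟩
  ext f x
  exact (h f x).symm

section SeparableRange

variable (𝕜 E F : Type*) [NontriviallyNormedField 𝕜] [SeminormedAddCommGroup E]
  [NormedSpace 𝕜 E] [SeminormedAddCommGroup F] [NormedSpace 𝕜 F]

def ContinuousLinearMap.separableRangeSubmodule : Submodule 𝕜 (E →L[𝕜] F) where
  carrier := {T | IsSeparable (range T)}
  zero_mem' := (countable_singleton 0).isSeparable.mono (range_subset_iff.2 fun _ => rfl)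
  add_mem' {A B} hA hB := ((hA.prod hB).image continuous_add).mono <| by
    rintro _ ⟨f, rfl⟩
    exact ⟨(A f, B f), ⟨mem_range_self f, mem_range_self f⟩, rfl⟩
  smul_mem' c A hA := (hA.image (continuous_const_smul c)).mono <| by
    rintro _ ⟨f, rfl⟩
    exact ⟨A f, mem_range_self f, rfl⟩

theorem ContinuousLinearMap.isClosed_separableRangeSubmodule :
    IsClosed (separableRangeSubmodule 𝕜 E F : Set (E →L[𝕜] F)) := by
  refine isClosed_of_closure_subset fun T hT => ?_
  obtain ⟨A, hA, hAT⟩ := mem_closure_iff_seq_limit.1 hT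
  have : range T ⊆ closure (⋃ n, range (A n)) := by
    rintro _ ⟨f, rfl⟩
    exact mem_closure_of_tendsto ((continuous_eval_const f).tendsto T |>.comp hAT)
      (Eventually.of_forall fun n => mem_iUnion.2 ⟨n, f, rfl⟩)
  exact (IsSeparable.iUnion hA).closure.mono this

end SeparableRange

theorem closure_GIdeal_subset_separableRangeSubmodule {Z : Type*} [NormedAddCommGroup Z]
    [NormedSpace ℝ Z] [SeparableSpace Z] :
    closure (GIdeal Z : Set (CC →L[ℝ] CC)) ⊆
      ContinuousLinearMap.separableRangeSubmodule ℝ CC CC := by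
  refine closure_minimal (Submodule.span_le.2 ?_)
    (ContinuousLinearMap.isClosed_separableRangeSubmodule ℝ CC CC)
  rintro _ ⟨S, R, rfl⟩
  exact (isSeparable_range R.continuous).mono (range_comp_subset_range S R)

theorem exists_mem_GIdeal_of_isSeparable_range {T : CC →L[ℝ] CC} (hT : IsSeparable (range T)) :
    ∃ σ < omega1, T ∈ GIdeal C(Iic σ, ℝ) := by
  obtain ⟨σ, hσ, hconst⟩ := exists_lt_omega1_of_eventually_nhds_top hT.eventually_forall_eq_top
  let i : C(Iic σ, Iic omega1) := ⟨inclusion (Iic_subset_Iic.2 hσ.le), continuous_inclusion _⟩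
  let r : C(Iic omega1, Iic σ) :=
    ⟨fun x => projIic σ x, continuous_projIic.comp continuous_subtype_val⟩
  refine ⟨σ, hσ, mem_GIdeal_of_factors_through i r T fun f x => ?_⟩
  rcases le_total x.1 σ with hx | hx
  · congr
    exact Subtype.ext (min_eq_right hx)
  · rw [hconst x hx _ (mem_range_self f), hconst _ (le_min le_rfl hx) _ (mem_range_self f)]

/-- For an operator `T` on `C([0,ω₁])` the following are equivalent: (i) `T` has separable
range; (ii) `T ∈ G_{C([0,σ])}` for some countable ordinal `σ`; (iii) `T` lies in the norm
closure of `G_{C([0,σ])}` for some countable ordinal `σ`. -/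
theorem separable_range_iff_factors_through_C_Iic (T : CC →L[ℝ] CC) :
    (TopologicalSpace.IsSeparable (Set.range T) ↔
      ∃ σ < omega1, T ∈ GIdeal (C(Set.Iic σ, ℝ))) ∧
    ((∃ σ < omega1, T ∈ GIdeal (C(Set.Iic σ, ℝ))) ↔
      ∃ σ < omega1, T ∈ closure (GIdeal (C(Set.Iic σ, ℝ)) : Set (CC →L[ℝ] CC))) := by
  have of_closure : (∃ σ < omega1, T ∈ closure (GIdeal C(Iic σ, ℝ) : Set (CC →L[ℝ] CC))) →
      IsSeparable (range T) := by
    rintro ⟨σ, hσ, hT⟩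
    have := separableSpace_continuousMap_Iic hσ
    exact closure_GIdeal_subset_separableRangeSubmodule hT
  have to_closure : (∃ σ < omega1, T ∈ GIdeal C(Iic σ, ℝ)) →
      ∃ σ < omega1, T ∈ closure (GIdeal C(Iic σ, ℝ) : Set (CC →L[ℝ] CC)) :=
    fun ⟨σ, hσ, hT⟩ => ⟨σ, hσ, subset_closure hT⟩
  exact ⟨⟨exists_mem_GIdeal_of_isSeparable_range, of_closure ∘ to_closure⟩,
    ⟨to_closure, exists_mem_GIdeal_of_isSeparable_range ∘ of_closure⟩⟩
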